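/- Let N ≥ 1 and k ≥ 0 be integers, and let β : (ℤ/Nℤ)² → ℚ satisfy Σ_{x∈(ℤ/Nℤ)²} β(x) = 0. Define ω^k_N(β) : GL₂(ℤ/Nℤ) → ℚ by ω^k_N(β)(g) = Σ_{x=(x₁,x₂)∈(ℤ/Nℤ)²} β(g·ᵗx) · B_{k+2}(x̃₂/N), where ᵗx is the column vector with entries x₁, x₂, x̃₂ ∈ {0,…,N−1} is the representative of x₂, and B_{k+2} is the (k+2)-nd Bernoulli polynomial. Then for every g ∈ GL₂(ℤ/Nℤ), every a ∈ (ℤ/Nℤ)^× and every b ∈ ℤ/Nℤ one has ω^k_N(β)(g·[[a,b],[0,1]]) = (−1)^k · ω^k_N(β)(−g); that is, the horospherical map ω^k_N takes values in the space ℱ^k_N = { f : GL₂(ℤ/Nℤ) → ℚ : f(g·[[a,b],[0,1]]) = (−1)^k f(−g) for all a ∈ (ℤ/Nℤ)^×, b ∈ ℤ/Nℤ }. -/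

import Mathlib

open Matrix

/-- The upper-triangular matrix `[[a, b], [0, 1]]` as an element of `GL₂(ℤ/Nℤ)`. -/
noncomputable def upperUnit {N : ℕ} (a : (ZMod N)ˣ) (b : ZMod N) :
    Matrix.GeneralLinearGroup (Fin 2) (ZMod N) where
  val := !![(a : ZMod N), b; 0, 1]
  inv := !![((a⁻¹ : (ZMod N)ˣ) : ZMod N), -(((a⁻¹ : (ZMod N)ˣ) : ZMod N) * b); 0, 1]
  val_inv := by
    ext i j
    fin_cases i <;> fin_cases j <;>
      simp [Matrix.mul_apply, Fin.sum_univ_succ, ← Units.val_mul, mul_comm, mul_left_comm]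
  inv_val := by
    ext i j
    fin_cases i <;> fin_cases j <;>
      simp [Matrix.mul_apply, Fin.sum_univ_succ, ← Units.val_mul, mul_comm, mul_left_comm]

/-!
The substitution `x ↦ [[a,b],[0,1]]·x` permutes `(ℤ/Nℤ)²` and fixes the second coordinate, so
`ω(β)(g·[[a,b],[0,1]]) = ω(β)(g)`. The substitution `x ↦ -x` gives
`ω(β)(-g) = Σ β(g·x) B_{k+2}(⟨-x₂/N⟩)`, and `⟨-x₂/N⟩ = 1 - ⟨x₂/N⟩` (or both vanish, and then
`B_{k+2}(1) = B_{k+2}(0)`), so the reflection formula `B_n(1 - t) = (-1)^n B_n(t)` yields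
`ω(β)(-g) = (-1)^k ω(β)(g)`.
-/

theorem Matrix.GeneralLinearGroup.sum_comp_mulVec {n R M : Type*} [Fintype n] [DecidableEq n]
    [CommRing R] [Fintype R] [AddCommMonoid M] (U : GL n R) (f : (n → R) → M) :
    ∑ x, f (U.1 *ᵥ x) = ∑ x, f x :=
  (mulVec_surjective_iff_isUnit.mpr U.isUnit).bijective_of_finite.sum_comp f

theorem upperUnit_mulVec_apply_one {N : ℕ} (a : (ZMod N)ˣ) (b : ZMod N) (x : Fin 2 → ZMod N) :
    ((upperUnit a b).1 *ᵥ x) 1 = x 1 := by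
  simp [upperUnit, mulVec, dotProduct, Fin.sum_univ_two]

theorem Polynomial.bernoulli_eval_val_neg_div {N : ℕ} [NeZero N] {n : ℕ} (hn : n ≠ 1)
    (x : ZMod N) :
    (bernoulli n).eval (((-x).val : ℚ) / N) = (-1) ^ n * (bernoulli n).eval ((x.val : ℚ) / N) := by
  rcases eq_or_ne x 0 with rfl | hx
  · have h := bernoulli_eval_one_sub n 0
    rw [sub_zero, bernoulli_eval_one, bernoulli_eval_zero,
      ← _root_.bernoulli_eq_bernoulli'_of_ne_one hn] at h
    simpa using h
  · have hN : (N : ℚ) ≠ 0 := Nat.cast_ne_zero.mpr (NeZero.ne N)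
    have hreflect : ((-x).val : ℚ) / N = 1 - (x.val : ℚ) / N := by
      rw [ZMod.neg_val, if_neg hx, Nat.cast_sub x.val_lt.le]
      field_simp
    rw [hreflect, bernoulli_eval_one_sub]

section Horospherical

variable {R M : Type*} [CommRing R] [Fintype R] [CommSemiring M]

/-- The horospherical map `ω^k_N(β)` is the case `φ r = B_{k+2}(⟨r/N⟩)`. -/
def horosphericalSum (β : (Fin 2 → R) → M) (φ : R → M) (g : GL (Fin 2) R) : M :=
  ∑ x, β (g.1 *ᵥ x) * φ (x 1)

theorem horosphericalSum_mul_of_mulVec_apply_one (β : (Fin 2 → R) → M) (φ : R → M)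
    (g U : GL (Fin 2) R) (hU : ∀ x, (U.1 *ᵥ x) 1 = x 1) :
    horosphericalSum β φ (g * U) = horosphericalSum β φ g := by
  rw [horosphericalSum, horosphericalSum, ← U.sum_comp_mulVec fun x ↦ β (g.1 *ᵥ x) * φ (x 1)]
  simp only [Units.val_mul, mulVec_mulVec, hU]

theorem horosphericalSum_neg (β : (Fin 2 → R) → M) (φ : R → M) (g : GL (Fin 2) R) :
    horosphericalSum β φ (-g) = horosphericalSum β (fun r ↦ φ (-r)) g := by
  rw [horosphericalSum, horosphericalSum, ← Equiv.sum_comp (Equiv.neg _)]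
  simp only [Equiv.neg_apply, Units.val_neg, neg_mulVec, mulVec_neg, neg_neg, Pi.neg_apply]

theorem horosphericalSum_const_mul (β : (Fin 2 → R) → M) (c : M) (φ : R → M)
    (g : GL (Fin 2) R) :
    horosphericalSum β (fun r ↦ c * φ r) g = c * horosphericalSum β φ g := by
  simp only [horosphericalSum, Finset.mul_sum, mul_left_comm]

end Horospherical

theorem horospherical_lands_in_FkN
    (N : ℕ) [NeZero N] (k : ℕ)
    (β : (Fin 2 → ZMod N) → ℚ)
    (g : Matrix.GeneralLinearGroup (Fin 2) (ZMod N))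
    (a : (ZMod N)ˣ) (b : ZMod N) :
    ∑ x : Fin 2 → ZMod N,
        β ((g * upperUnit a b).1.mulVec x) *
          (Polynomial.bernoulli (k + 2)).eval (((x 1).val : ℚ) / N)
      = (-1) ^ k *
        ∑ x : Fin 2 → ZMod N,
          β ((-g).1.mulVec x) *
            (Polynomial.bernoulli (k + 2)).eval (((x 1).val : ℚ) / N) := by
  set φ : ZMod N → ℚ := fun r ↦ (Polynomial.bernoulli (k + 2)).eval ((r.val : ℚ) / N)
  have hφ : (fun r ↦ φ (-r)) = fun r ↦ (-1) ^ (k + 2) * φ r :=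
    funext fun r ↦ Polynomial.bernoulli_eval_val_neg_div (by omega) r
  change horosphericalSum β φ (g * upperUnit a b) = (-1) ^ k * horosphericalSum β φ (-g)
  rw [horosphericalSum_mul_of_mulVec_apply_one β φ g _ (upperUnit_mulVec_apply_one a b),
    horosphericalSum_neg, hφ, horosphericalSum_const_mul, ← mul_assoc, ← pow_add,
    Even.neg_one_pow ⟨k + 1, by ring⟩, one_mul]
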